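/- Fix t > 0, λ1, λ2 > 0 and c1 ≥ c2 > 0, and write f1 = f^{ac}_{λ1,c1}, f2 = f^{ac}_{λ2,c2}. For every r with c1·t < r ≤ (c1 + c2)·t, the double integral of f1(ξ)·f2(ζ) over the region {(ξ, ζ) : ξ + ζ ≤ r, 0 < ξ < c1t, 0 < ζ < c2t} equals (1 − e^{−λ1t})·(1 − e^{−λ2t}) − e^{−(λ1+λ2)t}·[1 − exp((λ1/c1)·√(c1²t² − (r − c2t)²))] − (λ1/c1)·e^{−(λ1+λ2)t} · ∫_{r−c2t}^{c1t} ξ·(c1²t² − ξ²)^{−1/2} · exp((λ1/c1)·√(c1²t² − ξ²)) · exp((λ2/c2)·√(c2²t² − (r − ξ)²)) dξ. -/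

import Mathlib

/-!
Since `fac` vanishes off `(0, c t)`, the box constraints can be dropped, and Fubini turns the
double integral into `∫ f₁(ξ) F₂(r - ξ) dξ` with `F₂` the distribution function of `f₂`.
On `(0, c t)` the density is the derivative of `-exp (-λ t + (λ / c) √(c² t² - z²))`, so
`F₂(w) = 1 - exp (-λ₂ t + (λ₂ / c₂) √(c₂² t² - w²))` for `0 ≤ w ≤ c₂ t` and `F₂(w) = 1 - e^{-λ₂ t}`
beyond. Splitting the `ξ`-integral at `r - c₂ t` separates these two regimes; everything then
integrates in closed form except `∫ f₁(ξ) exp (…(r - ξ)…) dξ` over `(r - c₂ t, c₁ t)`, which is the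
integral left in the formula.
-/

open MeasureTheory ProbabilityTheory

/-- Density of the absolutely continuous part of the law of the distance from
the origin of a planar Markov random flight with speed `c` and rate `lam` at time `t`. -/
noncomputable def fac (t lam c z : ℝ) : ℝ :=
  if 0 < z ∧ z < c * t then
    (lam / c) * z / Real.sqrt (c ^ 2 * t ^ 2 - z ^ 2) *
      Real.exp (-(lam * t) + (lam / c) * Real.sqrt (c ^ 2 * t ^ 2 - z ^ 2))
  else 0

open Real Set intervalIntegral

-- `P(distance > z)` for `0 ≤ z ≤ c t`, the atom `exp (-l t)` at `c t` included.
noncomputable def facTail (t l c z : ℝ) : ℝ :=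
  exp (-(l * t) + l / c * √(c ^ 2 * t ^ 2 - z ^ 2))

section fac

variable {t l c : ℝ}

lemma fac_eq_zero_of_notMem {z : ℝ} (h : z ∉ Ioo 0 (c * t)) : fac t l c z = 0 := if_neg h

lemma support_fac_subset : Function.support (fac t l c) ⊆ Ioo 0 (c * t) :=
  fun _ hz => by_contra fun h => hz (fac_eq_zero_of_notMem h)

lemma fac_nonneg (hl : 0 ≤ l) (hc : 0 ≤ c) (z : ℝ) : 0 ≤ fac t l c z := by
  unfold fac
  split_ifs with h
  · have := h.1
    positivity
  · exact le_rfl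

-- At `z = c t` both sides vanish, the right one through `z / 0 = 0`.
lemma fac_eq_of_pos_of_le {z : ℝ} (h0 : 0 < z) (h1 : z ≤ c * t) :
    fac t l c z = l / c * exp (-(l * t)) *
      (z / √(c ^ 2 * t ^ 2 - z ^ 2) * exp (l / c * √(c ^ 2 * t ^ 2 - z ^ 2))) := by
  rcases h1.lt_or_eq with h1 | rfl
  · rw [fac, if_pos ⟨h0, h1⟩, exp_add]
    ring
  · rw [fac_eq_zero_of_notMem (by simp), show c ^ 2 * t ^ 2 - (c * t) ^ 2 = 0 by ring]
    simp

@[fun_prop]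
lemma continuous_facTail (t l c : ℝ) : Continuous (facTail t l c) := by
  unfold facTail
  fun_prop

lemma facTail_zero (hc : 0 < c) (ht : 0 ≤ t) : facTail t l c 0 = 1 := by
  rw [facTail, show c ^ 2 * t ^ 2 - 0 ^ 2 = (c * t) ^ 2 by ring, sqrt_sq (by positivity),
    show l / c * (c * t) = l * t by field_simp, neg_add_cancel, exp_zero]

lemma facTail_mul : facTail t l c (c * t) = exp (-(l * t)) := by
  simp [facTail, mul_pow]

lemma hasDerivAt_neg_facTail {z : ℝ} (h0 : 0 < z) (h1 : z < c * t) :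
    HasDerivAt (-facTail t l c) (fac t l c z) z := by
  have hpos : 0 < c ^ 2 * t ^ 2 - z ^ 2 := by nlinarith
  have hc : c ≠ 0 := by rintro rfl; linarith
  refine (((((hasDerivAt_pow 2 z).const_sub (c ^ 2 * t ^ 2)).sqrt hpos.ne').const_mul
    (l / c)).const_add (-(l * t)) |>.exp |>.neg).congr_deriv ?_
  rw [fac, if_pos ⟨h0, h1⟩]
  field_simp
  ring

lemma intervalIntegrable_fac (hl : 0 ≤ l) (hc : 0 ≤ c) {a b : ℝ} (ha : 0 ≤ a) (hab : a ≤ b)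
    (hb : b ≤ c * t) : IntervalIntegrable (fac t l c) volume a b := by
  refine intervalIntegrable_deriv_of_nonneg (continuous_facTail t l c).neg.continuousOn
    (fun x hx => ?_) fun x _ => fac_nonneg hl hc x
  rw [min_eq_left hab, max_eq_right hab] at hx
  exact hasDerivAt_neg_facTail (ha.trans_lt hx.1) (hx.2.trans_le hb)

lemma integral_fac (hl : 0 ≤ l) (hc : 0 ≤ c) {a b : ℝ} (ha : 0 ≤ a) (hab : a ≤ b)
    (hb : b ≤ c * t) : ∫ z in a..b, fac t l c z = facTail t l c a - facTail t l c b := by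
  rw [integral_eq_sub_of_hasDerivAt_of_le hab (continuous_facTail t l c).neg.continuousOn
    (fun x hx => hasDerivAt_neg_facTail (ha.trans_lt hx.1) (hx.2.trans_le hb))
    (intervalIntegrable_fac hl hc ha hab hb), Pi.neg_apply, Pi.neg_apply]
  ring

lemma integrable_fac (hl : 0 ≤ l) (hc : 0 ≤ c) (ht : 0 ≤ t) : Integrable (fac t l c) := by
  have hct : 0 ≤ c * t := mul_nonneg hc ht
  exact (integrableOn_iff_integrable_of_support_subset
    (support_fac_subset.trans Ioo_subset_Ioc_self)).1
    ((intervalIntegrable_iff_integrableOn_Ioc_of_le hct).1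
      (intervalIntegrable_fac hl hc le_rfl hct le_rfl))

lemma setIntegral_Iic_fac (hl : 0 ≤ l) (hc : 0 < c) (ht : 0 ≤ t) {w : ℝ} (hw : 0 ≤ w) :
    ∫ z in Iic w, fac t l c z = 1 - facTail t l c (min w (c * t)) := by
  have hm : 0 ≤ min w (c * t) := le_min hw (by positivity)
  rw [setIntegral_eq_of_subset_of_forall_sdiff_eq_zero measurableSet_Iic
      (Ioc_subset_Iic_self.trans (Iic_subset_Iic.2 (min_le_left _ _))),
    ← integral_of_le hm, integral_fac hl hc.le le_rfl hm (min_le_right _ _), facTail_zero hc ht]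
  exact fun x hx => fac_eq_zero_of_notMem fun h => hx.2 ⟨h.1, le_min hx.1 h.2.le⟩

lemma integral_fac_mul (hct : 0 ≤ c * t) (g : ℝ → ℝ) :
    ∫ x, fac t l c x * g x = ∫ x in 0..c * t, fac t l c x * g x := by
  rw [integral_of_le hct, setIntegral_eq_integral_of_forall_compl_eq_zero]
  intro x hx
  rw [fac_eq_zero_of_notMem fun h => hx (Ioo_subset_Ioc_self h), zero_mul]

end fac

lemma setIntegral_add_le_mul {f g : ℝ → ℝ} (hf : Integrable f) (hg : Integrable g) (r : ℝ) :
    ∫ p in {p : ℝ × ℝ | p.1 + p.2 ≤ r}, f p.1 * g p.2 = ∫ x, f x * ∫ y in Iic (r - x), g y := by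
  have hT : MeasurableSet {p : ℝ × ℝ | p.1 + p.2 ≤ r} :=
    measurableSet_le (by fun_prop) measurable_const
  rw [← MeasureTheory.integral_indicator hT, Measure.volume_eq_prod,
    integral_prod _ ((hf.mul_prod hg).indicator hT)]
  congr with x
  rw [← MeasureTheory.integral_const_mul, ← MeasureTheory.integral_indicator measurableSet_Iic]
  congr with y
  simp [indicator, le_sub_iff_add_le']

lemma setIntegral_fac_mul_fac {t l₁ l₂ c₁ c₂ r : ℝ} (hl₁ : 0 ≤ l₁) (hl₂ : 0 ≤ l₂) (hc₁ : 0 ≤ c₁)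
    (hc₂ : 0 < c₂) (ht : 0 ≤ t) (hr : c₁ * t ≤ r) :
    ∫ p in {p : ℝ × ℝ | p.1 + p.2 ≤ r ∧ 0 < p.1 ∧ p.1 < c₁ * t ∧ 0 < p.2 ∧ p.2 < c₂ * t},
        fac t l₁ c₁ p.1 * fac t l₂ c₂ p.2
      = ∫ x in 0..c₁ * t, fac t l₁ c₁ x * (1 - facTail t l₂ c₂ (min (r - x) (c₂ * t))) := by
  have hhalf : ∫ p in {p : ℝ × ℝ | p.1 + p.2 ≤ r ∧ 0 < p.1 ∧ p.1 < c₁ * t ∧ 0 < p.2 ∧ p.2 < c₂ * t},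
        fac t l₁ c₁ p.1 * fac t l₂ c₂ p.2
      = ∫ p in {p : ℝ × ℝ | p.1 + p.2 ≤ r}, fac t l₁ c₁ p.1 * fac t l₂ c₂ p.2 := by
    refine (setIntegral_eq_of_subset_of_forall_sdiff_eq_zero
      (measurableSet_le (measurable_fst.add measurable_snd) measurable_const)
      (fun _ => And.left) ?_).symm
    rintro p ⟨hp, hbox⟩
    by_cases h₁ : p.1 ∈ Ioo 0 (c₁ * t)
    · rw [fac_eq_zero_of_notMem fun h₂ => hbox ⟨hp, h₁.1, h₁.2, h₂.1, h₂.2⟩, mul_zero]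
    · rw [fac_eq_zero_of_notMem h₁, zero_mul]
  rw [hhalf, setIntegral_add_le_mul (integrable_fac hl₁ hc₁ ht) (integrable_fac hl₂ hc₂.le ht),
    integral_fac_mul (mul_nonneg hc₁ ht)]
  refine integral_congr fun x hx => ?_
  rw [uIcc_of_le (mul_nonneg hc₁ ht)] at hx
  rw [setIntegral_Iic_fac hl₂ hc₂ ht (by linarith [hx.2])]

lemma integral_fac_mul_facTail_sub {t l₁ l₂ c₁ c₂ r a b : ℝ} (ha : 0 < a) (hab : a ≤ b)
    (hb : b ≤ c₁ * t) :
    ∫ x in a..b, fac t l₁ c₁ x * facTail t l₂ c₂ (r - x)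
      = l₁ / c₁ * exp (-((l₁ + l₂) * t)) *
          ∫ ξ in a..b, ξ / √(c₁ ^ 2 * t ^ 2 - ξ ^ 2) * exp (l₁ / c₁ * √(c₁ ^ 2 * t ^ 2 - ξ ^ 2)) *
            exp (l₂ / c₂ * √(c₂ ^ 2 * t ^ 2 - (r - ξ) ^ 2)) := by
  rw [← intervalIntegral.integral_const_mul]
  refine integral_congr fun x hx => ?_
  rw [uIcc_of_le hab] at hx
  rw [fac_eq_of_pos_of_le (ha.trans_le hx.1) (hx.2.trans hb), facTail,
    show -((l₁ + l₂) * t) = -(l₁ * t) + -(l₂ * t) by ring, exp_add, exp_add]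
  ring

theorem double_integral_I1_large_r_general (t l1 l2 c1 c2 r : ℝ) (hl1 : 0 < l1) (hl2 : 0 < l2)
    (hc2 : 0 < c2) (hc12 : c2 ≤ c1) (hr0 : c1 * t < r) (hr : r ≤ (c1 + c2) * t) :
    (∫ p in {p : ℝ × ℝ | p.1 + p.2 ≤ r ∧ 0 < p.1 ∧ p.1 < c1 * t ∧ 0 < p.2 ∧ p.2 < c2 * t},
        fac t l1 c1 p.1 * fac t l2 c2 p.2)
      = (1 - Real.exp (-(l1 * t))) * (1 - Real.exp (-(l2 * t)))
        - Real.exp (-((l1 + l2) * t)) *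
            (1 - Real.exp ((l1 / c1) * Real.sqrt (c1 ^ 2 * t ^ 2 - (r - c2 * t) ^ 2)))
        - (l1 / c1) * Real.exp (-((l1 + l2) * t)) *
            (∫ ξ in (r - c2 * t)..(c1 * t),
            ξ / Real.sqrt (c1 ^ 2 * t ^ 2 - ξ ^ 2) *
              Real.exp ((l1 / c1) * Real.sqrt (c1 ^ 2 * t ^ 2 - ξ ^ 2)) *
              Real.exp ((l2 / c2) * Real.sqrt (c2 ^ 2 * t ^ 2 - (r - ξ) ^ 2))) := by
  have hc1 : 0 < c1 := hc2.trans_le hc12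
  have ht : 0 < t := by nlinarith
  have hm0 : 0 < r - c2 * t := by nlinarith
  have hmc : r - c2 * t ≤ c1 * t := by linarith
  rw [setIntegral_fac_mul_fac hl1.le hl2.le hc1.le hc2 ht.le hr0.le]
  set F : ℝ → ℝ := fun x => 1 - facTail t l2 c2 (min (r - x) (c2 * t)) with hF
  have hint : ∀ {a b : ℝ}, 0 ≤ a → a ≤ b → b ≤ c1 * t →
      IntervalIntegrable (fun x => fac t l1 c1 x * F x) volume a b := fun ha hab hb =>
    (intervalIntegrable_fac hl1.le hc1.le ha hab hb).mul_continuousOn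
      (by fun_prop : Continuous F).continuousOn
  have hleft : ∫ x in 0..r - c2 * t, fac t l1 c1 x * F x
      = (1 - facTail t l1 c1 (r - c2 * t)) * (1 - exp (-(l2 * t))) := by
    rw [integral_congr (g := fun x => fac t l1 c1 x * (1 - exp (-(l2 * t)))),
      intervalIntegral.integral_mul_const, integral_fac hl1.le hc1.le le_rfl hm0.le hmc,
      facTail_zero hc1 ht.le]
    intro x hx
    rw [uIcc_of_le hm0.le] at hx
    simp only [hF, min_eq_right (by linarith [hx.2] : c2 * t ≤ r - x), facTail_mul]
  have hright : ∫ x in r - c2 * t..c1 * t, fac t l1 c1 x * F x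
      = ∫ x in r - c2 * t..c1 * t, fac t l1 c1 x - fac t l1 c1 x * facTail t l2 c2 (r - x) := by
    refine integral_congr fun x hx => ?_
    rw [uIcc_of_le hmc] at hx
    simp only [hF, min_eq_left (by linarith [hx.1] : r - x ≤ c2 * t)]
    ring
  have hf₁ := intervalIntegrable_fac hl1.le hc1.le hm0.le hmc le_rfl
  rw [← integral_add_adjacent_intervals (hint le_rfl hm0.le hmc) (hint hm0.le hmc le_rfl),
    hleft, hright,
    integral_sub hf₁ (hf₁.mul_continuousOn (by fun_prop)),
    integral_fac hl1.le hc1.le hm0.le hmc le_rfl, integral_fac_mul_facTail_sub hm0 hmc le_rfl,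
    facTail_mul, facTail, show -((l1 + l2) * t) = -(l1 * t) + -(l2 * t) by ring, exp_add, exp_add]
  ring

theorem double_integral_I1_large_r (t l1 l2 c1 c2 r : ℝ) (ht : 0 < t) (hl1 : 0 < l1) (hl2 : 0 < l2)
    (hc2 : 0 < c2) (hc12 : c2 ≤ c1) (hr0 : c1 * t < r) (hr : r ≤ (c1 + c2) * t) :
    (∫ p in {p : ℝ × ℝ | p.1 + p.2 ≤ r ∧ 0 < p.1 ∧ p.1 < c1 * t ∧ 0 < p.2 ∧ p.2 < c2 * t},
        fac t l1 c1 p.1 * fac t l2 c2 p.2)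
      = (1 - Real.exp (-(l1 * t))) * (1 - Real.exp (-(l2 * t)))
        - Real.exp (-((l1 + l2) * t)) *
            (1 - Real.exp ((l1 / c1) * Real.sqrt (c1 ^ 2 * t ^ 2 - (r - c2 * t) ^ 2)))
        - (l1 / c1) * Real.exp (-((l1 + l2) * t)) *
            (∫ ξ in (r - c2 * t)..(c1 * t),
            ξ / Real.sqrt (c1 ^ 2 * t ^ 2 - ξ ^ 2) *
              Real.exp ((l1 / c1) * Real.sqrt (c1 ^ 2 * t ^ 2 - ξ ^ 2)) *
              Real.exp ((l2 / c2) * Real.sqrt (c2 ^ 2 * t ^ 2 - (r - ξ) ^ 2))) :=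
  double_integral_I1_large_r_general t l1 l2 c1 c2 r hl1 hl2 hc2 hc12 hr0 hr
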